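/- Relation between the Bures and quantum Hellinger distances: For all quantum states ρ, σ on ℂ^d, d_B(ρ,σ) ≤ d_H(ρ,σ) ≤ √2 · d_B(ρ,σ). -/

import Mathlib

/-!
Write `a = ‖√ρ √σ‖₁ = √F` and `t = Re Tr[√ρ √σ] = √F_H`. The two inequalities amount to
`t ≤ a` and `2a - 1 ≤ t`, and the second follows from `a² ≤ t` because `2a - 1 ≤ a²`.

`t ≤ a` is the bound `Re Tr A ≤ ‖A‖₁`, read off in an eigenbasis of `AᴴA`. For `a² ≤ t`, write
`‖AB‖₁ = Re Tr[Wᴴ A B]` with `W` the partial isometry of the polar decomposition of `AB`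
(`A = √ρ`, `B = √σ`). Splitting `A` and `B` into their own square roots, Cauchy–Schwarz for the
Hilbert–Schmidt inner product gives `‖AB‖₁² ≤ Tr[Wᴴ A W B] · Tr[AB]`, and a second Cauchy–Schwarz
step bounds `Tr[Wᴴ A W B]` by `‖AW‖₂ ‖WB‖₂ ≤ ‖A‖₂ ‖B‖₂ = 1`.
-/

open scoped ComplexOrder Classical

noncomputable section

namespace QHT

variable {ι : Type*} [Fintype ι] [DecidableEq ι]

/-- Trace norm of a complex matrix: `Tr[√(Aᴴ A)]`. -/
def traceNorm (A : Matrix ι ι ℂ) : ℝ :=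
  (((Matrix.posSemidef_conjTranspose_mul_self A).1.eigenvectorUnitary : Matrix ι ι ℂ) *
    Matrix.diagonal (((↑) : ℝ → ℂ) ∘ Real.sqrt ∘
      (Matrix.posSemidef_conjTranspose_mul_self A).1.eigenvalues) *
    (star ((Matrix.posSemidef_conjTranspose_mul_self A).1.eigenvectorUnitary : Matrix ι ι ℂ))).trace.re

/-- A quantum state: positive semidefinite with unit trace. -/
def IsState (ρ : Matrix ι ι ℂ) : Prop := ρ.PosSemidef ∧ ρ.trace = 1

/-- Positive semidefinite square root (junk value `0` off the PSD matrices). -/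
def matSqrt (A : Matrix ι ι ℂ) : Matrix ι ι ℂ :=
  if h : A.PosSemidef then
    (h.1.eigenvectorUnitary : Matrix ι ι ℂ) *
      Matrix.diagonal (((↑) : ℝ → ℂ) ∘ Real.sqrt ∘ h.1.eigenvalues) *
      (star (h.1.eigenvectorUnitary : Matrix ι ι ℂ))
  else 0

/-- Real power of a Hermitian matrix, applying `x ↦ x ^ s` to positive
eigenvalues and `x ↦ 0` to the remaining ones (so `A ^ 0` is the support
projection); junk value `0` off the Hermitian matrices. -/
def matRpow (A : Matrix ι ι ℂ) (s : ℝ) : Matrix ι ι ℂ :=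
  if h : A.IsHermitian then
    (h.eigenvectorUnitary : Matrix ι ι ℂ) *
      Matrix.diagonal (fun i =>
        ((if 0 < h.eigenvalues i then (h.eigenvalues i) ^ s else 0 : ℝ) : ℂ)) *
      (star (h.eigenvectorUnitary : Matrix ι ι ℂ))
  else 0

/-- Fidelity `F(ρ,σ) = ‖√ρ √σ‖₁²`. -/
def Fid (ρ σ : Matrix ι ι ℂ) : ℝ := (traceNorm (matSqrt ρ * matSqrt σ)) ^ 2

/-- Holevo fidelity `F_H(ρ,σ) = (Tr[√ρ √σ])²`. -/
def FidH (ρ σ : Matrix ι ι ℂ) : ℝ := (((matSqrt ρ * matSqrt σ).trace).re) ^ 2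

/-- `Q_s(A‖B) = Tr[A^s B^{1-s}]`. -/
def Qs (s : ℝ) (A B : Matrix ι ι ℂ) : ℝ := ((matRpow A s * matRpow B (1 - s)).trace).re

/-- `Q_min(A‖B) = min_{s ∈ [0,1]} Q_s(A‖B)`. -/
def Qmin (A B : Matrix ι ι ℂ) : ℝ :=
  sInf { x : ℝ | ∃ s ∈ Set.Icc (0 : ℝ) 1, x = Qs s A B }

/-- Bures distance. -/
def dB (ρ σ : Matrix ι ι ℂ) : ℝ := Real.sqrt (2 * (1 - Real.sqrt (Fid ρ σ)))

/-- Quantum Hellinger distance. -/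
def dH (ρ σ : Matrix ι ι ℂ) : ℝ := Real.sqrt (2 * (1 - Real.sqrt (FidH ρ σ)))

/-- `n`-fold Kronecker (tensor) power of a matrix. -/
def tensorPow {d : ℕ} (A : Matrix (Fin d) (Fin d) ℂ) (n : ℕ) :
    Matrix (Fin n → Fin d) (Fin n → Fin d) ℂ :=
  Matrix.of fun i j => ∏ k, A (i k) (j k)

/-- Optimal error probability of symmetric binary quantum hypothesis testing
with `n` copies. -/
def pErr {d : ℕ} (p : ℝ) (ρ : Matrix (Fin d) (Fin d) ℂ) (q : ℝ)
    (σ : Matrix (Fin d) (Fin d) ℂ) (n : ℕ) : ℝ :=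
  sInf { x : ℝ | ∃ Λ : Matrix (Fin n → Fin d) (Fin n → Fin d) ℂ,
    Λ.PosSemidef ∧ (1 - Λ).PosSemidef ∧
    x = p * (((1 - Λ) * tensorPow ρ n).trace).re + q * ((Λ * tensorPow σ n).trace).re }

/-- Sample complexity of symmetric binary quantum hypothesis testing. -/
def sampleComplexity {d : ℕ} (p : ℝ) (ρ : Matrix (Fin d) (Fin d) ℂ) (q : ℝ)
    (σ : Matrix (Fin d) (Fin d) ℂ) (ε : ℝ) : ℕ :=
  sInf { n : ℕ | 1 ≤ n ∧ pErr p ρ q σ n ≤ ε }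

/-- Optimal type II error `β_ε(ρ‖σ)` of asymmetric hypothesis testing. -/
def betaErr (ε : ℝ) (ρ σ : Matrix ι ι ℂ) : ℝ :=
  sInf { x : ℝ | ∃ Λ : Matrix ι ι ℂ, Λ.PosSemidef ∧ (1 - Λ).PosSemidef ∧
    (((1 - Λ) * ρ).trace).re ≤ ε ∧ x = ((Λ * σ).trace).re }

/-- Sample complexity of asymmetric binary quantum hypothesis testing. -/
def sampleComplexityAsym {d : ℕ} (ρ σ : Matrix (Fin d) (Fin d) ℂ) (ε δ : ℝ) : ℕ :=
  sInf { n : ℕ | 1 ≤ n ∧ betaErr ε (tensorPow ρ n) (tensorPow σ n) ≤ δ }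

/-- Petz–Rényi divergence `D_α(ρ‖σ)`. -/
def petzRenyi (α : ℝ) (ρ σ : Matrix ι ι ℂ) : ℝ :=
  (1 / (α - 1)) * Real.log (((matRpow ρ α * matRpow σ (1 - α)).trace).re)

/-- Sandwiched Rényi divergence `D̃_α(ρ‖σ)`. -/
def sandwichedRenyi (α : ℝ) (ρ σ : Matrix ι ι ℂ) : ℝ :=
  (1 / (α - 1)) * Real.log
    (((matRpow (matRpow σ ((1 - α) / (2 * α)) * ρ * matRpow σ ((1 - α) / (2 * α))) α).trace).re)

open Matrix

section CauchySchwarz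

variable {m n : Type*} [Fintype m]

lemma re_conjTranspose_mul_self_apply (Z : Matrix m n ℂ) (i : n) :
    ((Zᴴ * Z) i i).re = ∑ k, ‖Z k i‖ ^ 2 := by
  simp [mul_apply, ← Complex.normSq_eq_norm_sq, Complex.normSq_apply, Complex.re_sum]

lemma norm_conjTranspose_mul_apply_le (X Y : Matrix m n ℂ) (i : n) :
    ‖(Xᴴ * Y) i i‖ ≤ √((Xᴴ * X) i i).re * √((Yᴴ * Y) i i).re := by
  rw [re_conjTranspose_mul_self_apply, re_conjTranspose_mul_self_apply, mul_apply]
  calc ‖∑ k, Xᴴ i k * Y k i‖ ≤ ∑ k, ‖X k i‖ * ‖Y k i‖ :=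
        (norm_sum_le _ _).trans_eq (by simp)
    _ ≤ _ := Real.sum_mul_le_sqrt_mul_sqrt _ _ _

lemma norm_trace_conjTranspose_mul_le [Fintype n] (X Y : Matrix m n ℂ) :
    ‖(Xᴴ * Y).trace‖ ≤ √(Xᴴ * X).trace.re * √(Yᴴ * Y).trace.re := by
  simp only [trace, diag, Complex.re_sum]
  refine (norm_sum_le _ _).trans <|
    (Finset.sum_le_sum fun i _ => norm_conjTranspose_mul_apply_le X Y i).trans <|
    Real.sum_sqrt_mul_sqrt_le _ (fun i => ?_) (fun i => ?_) <;>
  · rw [re_conjTranspose_mul_self_apply]; positivity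

lemma _root_.Matrix.PosSemidef.re_trace_nonneg [Fintype n] {M : Matrix n n ℂ}
    (hM : M.PosSemidef) : 0 ≤ M.trace.re :=
  (Complex.nonneg_iff.mp hM.trace_nonneg).1

end CauchySchwarz

section PartialIsometry

variable {m n p : Type*} [Fintype m] [Fintype n] [Fintype p]

def IsPartialIsometry (W : Matrix m n ℂ) : Prop := W * Wᴴ * W = W

lemma IsPartialIsometry.conjTranspose {W : Matrix m n ℂ} (hW : IsPartialIsometry W) :
    IsPartialIsometry Wᴴ := by
  unfold IsPartialIsometry at hW ⊢
  simpa [Matrix.mul_assoc] using congrArg Matrix.conjTranspose hW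

lemma IsPartialIsometry.posSemidef_one_sub_conjTranspose_mul_self [DecidableEq n]
    {W : Matrix m n ℂ} (hW : IsPartialIsometry W) : (1 - Wᴴ * W).PosSemidef := by
  have hidem : Wᴴ * W * (Wᴴ * W) = Wᴴ * W :=
    calc Wᴴ * W * (Wᴴ * W) = Wᴴ * (W * Wᴴ * W) := by simp only [Matrix.mul_assoc]
      _ = Wᴴ * W := by rw [show W * Wᴴ * W = W from hW]
  have : (1 - Wᴴ * W)ᴴ * (1 - Wᴴ * W) = 1 - Wᴴ * W := by
    simp only [conjTranspose_sub, conjTranspose_one, conjTranspose_mul,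
      conjTranspose_conjTranspose, Matrix.sub_mul, Matrix.mul_sub, Matrix.one_mul,
      Matrix.mul_one, hidem, sub_self, sub_zero]
  exact this ▸ posSemidef_conjTranspose_mul_self _

lemma IsPartialIsometry.re_trace_conjTranspose_mul_self_mul_left_le {W : Matrix m n ℂ}
    (hW : IsPartialIsometry W) (C : Matrix n p ℂ) :
    ((W * C)ᴴ * (W * C)).trace.re ≤ (Cᴴ * C).trace.re := by
  classical
  have := (hW.posSemidef_one_sub_conjTranspose_mul_self.conjTranspose_mul_mul_same C).trace_nonneg
  rw [Matrix.mul_sub, Matrix.sub_mul, Matrix.mul_one, trace_sub] at this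
  simpa [Matrix.mul_assoc] using (Complex.le_def.mp this).1

lemma IsPartialIsometry.re_trace_conjTranspose_mul_self_mul_right_le {W : Matrix m n ℂ}
    (hW : IsPartialIsometry W) (C : Matrix p m ℂ) :
    ((C * W)ᴴ * (C * W)).trace.re ≤ (Cᴴ * C).trace.re := by
  rw [trace_mul_comm, trace_mul_comm Cᴴ]
  simpa [Matrix.mul_assoc] using hW.conjTranspose.re_trace_conjTranspose_mul_self_mul_left_le Cᴴ

lemma IsPartialIsometry.re_trace_conjTranspose_mul_mul_mul_le {W A B : Matrix n n ℂ}
    (hW : IsPartialIsometry W) (hA : A.IsHermitian) (hB : B.IsHermitian) :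
    (Wᴴ * A * W * B).trace.re ≤ √(A * A).trace.re * √(B * B).trace.re := by
  have hAW : ((A * W)ᴴ * (A * W)).trace.re ≤ (A * A).trace.re := by
    simpa [hA.eq] using hW.re_trace_conjTranspose_mul_self_mul_right_le A
  have hWB : ((W * B)ᴴ * (W * B)).trace.re ≤ (B * B).trace.re := by
    simpa [hB.eq] using hW.re_trace_conjTranspose_mul_self_mul_left_le B
  have hfactor : Wᴴ * A * W * B = (A * W)ᴴ * (W * B) := by
    rw [conjTranspose_mul, hA.eq]; simp only [Matrix.mul_assoc]
  rw [hfactor]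
  refine (Complex.re_le_norm _).trans <| (norm_trace_conjTranspose_mul_le _ _).trans ?_
  gcongr

end PartialIsometry

lemma matSqrt_eq_cfc {A : Matrix ι ι ℂ} (hA : A.PosSemidef) : matSqrt A = cfc Real.sqrt A := by
  rw [matSqrt, dif_pos hA, hA.1.cfc_eq, IsHermitian.cfc, Unitary.conjStarAlgAut_apply]
  rfl

open scoped MatrixOrder in
lemma spectrum_nonneg_of_posSemidef {A : Matrix ι ι ℂ} (hA : A.PosSemidef) :
    ∀ x ∈ spectrum ℝ A, 0 ≤ x :=
  fun _ hx => spectrum_nonneg_of_nonneg hA.nonneg hx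

open scoped MatrixOrder in
lemma matSqrt_posSemidef {A : Matrix ι ι ℂ} (hA : A.PosSemidef) : (matSqrt A).PosSemidef :=
  (matSqrt_eq_cfc hA ▸ cfc_nonneg fun x _ => Real.sqrt_nonneg x).posSemidef

lemma matSqrt_mul_self {A : Matrix ι ι ℂ} (hA : A.PosSemidef) : matSqrt A * matSqrt A = A :=
  calc matSqrt A * matSqrt A = cfc (fun x => √x * √x) A := by rw [matSqrt_eq_cfc hA, cfc_mul ..]
    _ = cfc id A := cfc_congr fun x hx => Real.mul_self_sqrt (spectrum_nonneg_of_posSemidef hA x hx)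
    _ = A := cfc_id ℝ A hA.1

lemma traceNorm_eq_re_trace_matSqrt (A : Matrix ι ι ℂ) :
    traceNorm A = (matSqrt (Aᴴ * A)).trace.re := by
  rw [matSqrt, dif_pos (posSemidef_conjTranspose_mul_self A)]
  rfl

-- The witness is `A (AᴴA)^(-1/2)`, the inverse square root taken on the support of `AᴴA`
-- thanks to `(√0)⁻¹ = 0`.
lemma exists_isPartialIsometry_re_trace_eq_traceNorm (A : Matrix ι ι ℂ) :
    ∃ W : Matrix ι ι ℂ, IsPartialIsometry W ∧ (Wᴴ * A).trace.re = traceNorm A := by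
  have hX := posSemidef_conjTranspose_mul_self A
  have hspec := spectrum_nonneg_of_posSemidef hX
  set X := Aᴴ * A
  have hc (f : ℝ → ℝ) : ContinuousOn f (spectrum ℝ X) := finite_real_spectrum.continuousOn f
  have hXid : cfc id X = X := cfc_id ℝ X hX.1
  set G := cfc (fun x => (√x)⁻¹) X
  have hG : Gᴴ = G := IsSelfAdjoint.star_eq (cfc_predicate _ X)
  have hinv_mul {x : ℝ} (hx : 0 ≤ x) : (√x)⁻¹ * x = √x := by
    rw [inv_mul_eq_div, Real.div_sqrt]
  have hGX : G * X = matSqrt X :=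
    calc G * X = cfc (fun x => (√x)⁻¹ * id x) X := by rw [cfc_mul _ _ X (hc _) (hc _), hXid]
      _ = matSqrt X := by
        rw [matSqrt_eq_cfc hX]; exact cfc_congr fun x hx => hinv_mul (hspec x hx)
  have hGGXG : G * G * X * G = G :=
    calc G * G * X * G = cfc (fun x => (√x)⁻¹ * ((√x)⁻¹ * id x) * (√x)⁻¹) X := by
          rw [cfc_mul _ _ X (hc _) (hc _), cfc_mul _ _ X (hc _) (hc _),
            cfc_mul _ _ X (hc _) (hc _), hXid, Matrix.mul_assoc G G X]
      _ = G := cfc_congr fun x hx => by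
          rw [id, hinv_mul (hspec x hx)]; by_cases h : √x = 0 <;> simp [h]
  refine ⟨A * G, ?_, ?_⟩
  · calc A * G * (A * G)ᴴ * (A * G) = A * (G * G * X * G) := by
          rw [conjTranspose_mul, hG]; simp only [X, Matrix.mul_assoc]
      _ = A * G := by rw [hGGXG]
  · rw [conjTranspose_mul, hG, Matrix.mul_assoc, hGX, traceNorm_eq_re_trace_matSqrt]

lemma traceNorm_nonneg (A : Matrix ι ι ℂ) : 0 ≤ traceNorm A := by
  rw [traceNorm_eq_re_trace_matSqrt]
  exact (matSqrt_posSemidef (posSemidef_conjTranspose_mul_self A)).re_trace_nonneg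

lemma traceNorm_eq_sum_sqrt_eigenvalues (A : Matrix ι ι ℂ) :
    traceNorm A = ∑ i, √((posSemidef_conjTranspose_mul_self A).1.eigenvalues i) := by
  rw [traceNorm, trace_mul_cycle, Unitary.coe_star_mul_self, Matrix.one_mul, trace_diagonal]
  simp

lemma re_trace_le_traceNorm (A : Matrix ι ι ℂ) : A.trace.re ≤ traceNorm A := by
  have hX := (posSemidef_conjTranspose_mul_self A).1
  set V : Matrix ι ι ℂ := (hX.eigenvectorUnitary : Matrix ι ι ℂ)
  have hVV : Vᴴ * V = 1 := Unitary.coe_star_mul_self _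
  have hD : (A * V)ᴴ * (A * V) = diagonal (RCLike.ofReal ∘ hX.eigenvalues) := by
    rw [← hX.conjStarAlgAut_star_eigenvectorUnitary, Unitary.conjStarAlgAut_star_apply,
      conjTranspose_mul]
    simp [V, Matrix.mul_assoc, star_eq_conjTranspose]
  have hVV' : V * Vᴴ = 1 := Unitary.coe_mul_star_self _
  have htr : A.trace = (Vᴴ * (A * V)).trace := by
    rw [trace_mul_comm, Matrix.mul_assoc, hVV', Matrix.mul_one]
  calc A.trace.re ≤ ‖(Vᴴ * (A * V)).trace‖ := htr ▸ Complex.re_le_norm _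
    _ ≤ ∑ i, ‖(Vᴴ * (A * V)) i i‖ := norm_sum_le _ _
    _ ≤ ∑ i, √(hX.eigenvalues i) := Finset.sum_le_sum fun i _ => by
        have := norm_conjTranspose_mul_apply_le V (A * V) i
        rw [hVV, hD] at this
        simpa using this
    _ = traceNorm A := (traceNorm_eq_sum_sqrt_eigenvalues A).symm

lemma traceNorm_mul_sq_le {A B : Matrix ι ι ℂ} (hA : A.PosSemidef) (hB : B.PosSemidef) :
    traceNorm (A * B) ^ 2 ≤ √(A * A).trace.re * √(B * B).trace.re * (A * B).trace.re := by
  obtain ⟨W, hW, hWtr⟩ := exists_isPartialIsometry_re_trace_eq_traceNorm (A * B)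
  set q := matSqrt A
  set w := matSqrt B
  have hq : qᴴ = q := (matSqrt_posSemidef hA).1
  have hw : wᴴ = w := (matSqrt_posSemidef hB).1
  have hqq : q * q = A := matSqrt_mul_self hA
  have hsandwich (M : Matrix ι ι ℂ) : (w * M * w).trace = (M * B).trace := by
    rw [trace_mul_comm, ← Matrix.mul_assoc, trace_mul_comm, matSqrt_mul_self hB]
  have hshort : ((q * w)ᴴ * (q * w)).trace = (A * B).trace := by
    rw [← hsandwich, ← hqq, conjTranspose_mul, hq, hw]; simp only [Matrix.mul_assoc]
  have hcross : ((q * W * w)ᴴ * (q * w)).trace = (Wᴴ * (A * B)).trace :=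
    calc ((q * W * w)ᴴ * (q * w)).trace = (w * (Wᴴ * (q * q)) * w).trace := by
          rw [conjTranspose_mul, conjTranspose_mul, hq, hw]; simp only [Matrix.mul_assoc]
      _ = (Wᴴ * (A * B)).trace := by rw [hsandwich, hqq, Matrix.mul_assoc]
  have hlong : ((q * W * w)ᴴ * (q * W * w)).trace = (Wᴴ * A * W * B).trace :=
    calc ((q * W * w)ᴴ * (q * W * w)).trace = (w * (Wᴴ * (q * q) * W) * w).trace := by
          rw [conjTranspose_mul, conjTranspose_mul, hq, hw]; simp only [Matrix.mul_assoc]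
      _ = (Wᴴ * A * W * B).trace := by rw [hsandwich, hqq]
  have hcs : traceNorm (A * B) ≤
      √((q * W * w)ᴴ * (q * W * w)).trace.re * √((q * w)ᴴ * (q * w)).trace.re := by
    rw [← hWtr, ← hcross]
    exact (Complex.re_le_norm _).trans (norm_trace_conjTranspose_mul_le _ _)
  have hN0 := (posSemidef_conjTranspose_mul_self (q * W * w)).re_trace_nonneg
  have ht0 := (posSemidef_conjTranspose_mul_self (q * w)).re_trace_nonneg
  rw [hshort] at hcs ht0
  rw [hlong] at hcs hN0
  calc traceNorm (A * B) ^ 2 ≤ (√(Wᴴ * A * W * B).trace.re * √(A * B).trace.re) ^ 2 :=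
        pow_le_pow_left₀ (traceNorm_nonneg _) hcs 2
    _ = (Wᴴ * A * W * B).trace.re * (A * B).trace.re := by
        rw [mul_pow, Real.sq_sqrt hN0, Real.sq_sqrt ht0]
    _ ≤ _ := mul_le_mul_of_nonneg_right
        (hW.re_trace_conjTranspose_mul_mul_mul_le hA.1 hB.1) ht0

/-- **Relation between the Bures and quantum Hellinger distances**:
`d_B(ρ,σ) ≤ d_H(ρ,σ) ≤ √2 · d_B(ρ,σ)`. -/
theorem bures_hellinger_relation {d : ℕ} (ρ σ : Matrix (Fin d) (Fin d) ℂ)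
    (hρ : IsState ρ) (hσ : IsState σ) :
    dB ρ σ ≤ dH ρ σ ∧ dH ρ σ ≤ Real.sqrt 2 * dB ρ σ := by
  have hunit {τ : Matrix (Fin d) (Fin d) ℂ} (hτ : IsState τ) :
      (matSqrt τ * matSqrt τ).trace.re = 1 := by
    rw [matSqrt_mul_self hτ.1, hτ.2, Complex.one_re]
  set a := traceNorm (matSqrt ρ * matSqrt σ)
  set t := (matSqrt ρ * matSqrt σ).trace.re
  have hta : t ≤ a := re_trace_le_traceNorm _
  have hat : a ^ 2 ≤ t := by
    simpa [hunit hρ, hunit hσ] using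
      traceNorm_mul_sq_le (matSqrt_posSemidef hρ.1) (matSqrt_posSemidef hσ.1)
  have hFid : √(Fid ρ σ) = a := Real.sqrt_sq (traceNorm_nonneg _)
  have hFidH : √(FidH ρ σ) = t := Real.sqrt_sq ((sq_nonneg a).trans hat)
  rw [dB, dH, hFid, hFidH, ← Real.sqrt_mul zero_le_two]
  exact ⟨Real.sqrt_le_sqrt (by linarith), Real.sqrt_le_sqrt (by nlinarith [sq_nonneg (a - 1)])⟩

end QHT

end
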